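/- Consider a duopoly where fraction 1-ε of customers are greedy (buy from the strictly cheapest seller whose price is at most their willingness-to-pay, splitting equally on ties) and fraction ε ∈ (0,1) are loyal to seller 1 (buy from seller 1 iff p1 is at most their willingness-to-pay), with willingness-to-pay uniform on [0,1] for all customers. Then no pure-strategy Nash equilibrium exists. -/
import Mathlib


/-- Seller 1's revenue: fraction `ε` of customers are loyal to seller 1, fraction `1-ε`
are greedy (buy from the strictly cheapest affordable seller, splitting ties equally);
willingness-to-pay is uniform on `[0,1]`. -/
noncomputable def R1 (ε p1 p2 : ℝ) : ℝ :=
  p1 * (ε * (1 - p1) + (1 - ε) * (1 - p1) * (if p1 < p2 then 1 else 0) +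
    (1 - ε) * (1 - p1) / 2 * (if p1 = p2 then 1 else 0))

/-- Seller 2's revenue: only greedy customers ever buy from seller 2. -/
noncomputable def R2 (ε p1 p2 : ℝ) : ℝ :=
  p2 * (1 - ε) * (1 - p2) *
    ((if p2 < p1 then 1 else 0) + (1 / 2) * (if p2 = p1 then 1 else 0))

/-- With a positive mass of customers loyal to seller 1, no pure-strategy Nash
equilibrium exists. -/
theorem stmt4 (ε : ℝ) (hε : ε ∈ Set.Ioo (0 : ℝ) 1) :
    ¬ ∃ p1 p2 : ℝ, p1 ∈ Set.Icc (0 : ℝ) 1 ∧ p2 ∈ Set.Icc (0 : ℝ) 1 ∧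
      (∀ p ∈ Set.Icc (0 : ℝ) 1, R1 ε p p2 ≤ R1 ε p1 p2) ∧
      (∀ p ∈ Set.Icc (0 : ℝ) 1, R2 ε p1 p ≤ R2 ε p1 p2) := by
  obtain ⟨hε0, hε1⟩ := hε
  rintro ⟨p1, p2, ⟨h10, h11⟩, ⟨h20, h21⟩, H1, H2⟩
  rcases lt_trichotomy p1 p2 with hlt | heq | hgt
  · -- p1 < p2 : seller 2 gets 0
    rcases eq_or_lt_of_le h10 with h0 | h0
    · -- p1 = 0 : seller 1 deviates to p2/2
      have hp2 : 0 < p2 := by linarith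
      have := H1 (p2 / 2) ⟨by linarith, by linarith⟩
      simp only [R1, ← h0, if_pos (show p2 / 2 < p2 by linarith),
        if_neg (show ¬ p2 / 2 = p2 by intro h; linarith)] at this
      nlinarith
    · -- p1 > 0 : seller 2 deviates to p1/2
      have := H2 (p1 / 2) ⟨by linarith, by linarith⟩
      simp only [R2, if_pos (show p1 / 2 < p1 by linarith),
        if_neg (show ¬ p1 / 2 = p1 by intro h; linarith),
        if_neg (show ¬ p2 < p1 by linarith),
        if_neg (show ¬ p2 = p1 by intro h; linarith)] at this
      nlinarith [mul_pos (mul_pos (show (0:ℝ) < p1 / 2 by linarith)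
        (show (0:ℝ) < 1 - ε by linarith)) (show (0:ℝ) < 1 - p1 / 2 by linarith)]
  · -- p1 = p2
    subst heq
    rcases eq_or_lt_of_le h10 with h0 | h0
    · -- p1 = 0 : seller 1 deviates to 1/2
      have := H1 (1/2) ⟨by norm_num, by norm_num⟩
      simp only [R1, ← h0, if_neg (show ¬ (1:ℝ)/2 < 0 by norm_num),
        if_neg (show ¬ (1:ℝ)/2 = 0 by norm_num)] at this
      nlinarith
    · rcases eq_or_lt_of_le h11 with h1 | h1
      · -- p1 = 1 : seller 2 deviates to 1/2
        have := H2 (1/2) ⟨by norm_num, by norm_num⟩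
        simp only [R2, h1, if_pos (show (1:ℝ)/2 < 1 by norm_num),
          if_neg (show ¬ (1:ℝ)/2 = 1 by norm_num), lt_irrefl, if_neg (lt_irrefl (1:ℝ)),
          if_pos rfl] at this
        nlinarith
      · -- 0 < p1 < 1 : seller 2 deviates to 3p1/4
        have := H2 (3 * p1 / 4) ⟨by linarith, by linarith⟩
        simp only [R2, if_pos (show 3 * p1 / 4 < p1 by linarith),
          if_neg (show ¬ 3 * p1 / 4 = p1 by intro h; linarith),
          if_neg (lt_irrefl p1), if_pos rfl, if_true] at this
        nlinarith [mul_pos (show (0:ℝ) < 1 - ε by linarith)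
          (show (0:ℝ) < 3 * p1 / 4 * (1 - 3 * p1 / 4) - p1 * (1 - p1) * (1 / 2) by nlinarith)]
  · -- p2 < p1
    -- seller 2's midpoint deviation forces p1 + 3 p2 ≥ 2
    have hm := H2 ((p1 + p2) / 2) ⟨by linarith, by linarith⟩
    simp only [R2, if_pos (show (p1 + p2) / 2 < p1 by linarith),
      if_neg (show ¬ (p1 + p2) / 2 = p1 by intro h; linarith),
      if_pos hgt, if_neg (ne_of_lt hgt)] at hm
    have hsum : p1 + 3 * p2 ≥ 2 := by
      by_contra h
      push_neg at h
      nlinarith [mul_pos (mul_pos (show (0:ℝ) < 1 - ε by linarith)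
        (show (0:ℝ) < (p1 - p2) / 2 by linarith))
        (show (0:ℝ) < 1 - (p1 + p2) / 2 - p2 by linarith)]
    have hp1 : 1 / 2 < p1 := by linarith
    -- seller 2's deviation to 1/2 forces p2 = 1/2
    have hhalf := H2 (1/2) ⟨by norm_num, by norm_num⟩
    simp only [R2, if_pos hp1, if_neg (ne_of_lt hp1),
      if_pos hgt, if_neg (ne_of_lt hgt)] at hhalf
    have h14 : 1 / 4 ≤ p2 * (1 - p2) := by
      by_contra h
      push_neg at h
      nlinarith [mul_pos (show (0:ℝ) < 1 - ε by linarith)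
        (show (0:ℝ) < 1 / 4 - p2 * (1 - p2) by linarith)]
    have hsq : (2 * p2 - 1) ^ 2 = 0 := le_antisymm (by nlinarith) (sq_nonneg _)
    have hp2 : p2 = 1 / 2 := by have := sq_eq_zero_iff.mp hsq; linarith
    -- seller 1 deviates to (1+ε)/4 < 1/2 = p2
    have hd := H1 ((1 + ε) / 4) ⟨by linarith, by linarith⟩
    simp only [R1, hp2, if_pos (show (1 + ε) / 4 < 1 / 2 by linarith),
      if_neg (show ¬ (1 + ε) / 4 = 1 / 2 by intro h; linarith),
      if_neg (show ¬ p1 < 1 / 2 by linarith),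
      if_neg (show ¬ p1 = 1 / 2 by intro h; linarith)] at hd
    nlinarith [mul_nonneg hε0.le (sq_nonneg (2 * p1 - 1)),
      mul_pos (show (0:ℝ) < 1 - ε by linarith) (show (0:ℝ) < 3 + ε by linarith)]
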